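/- arXiv:2002.11459 — 4 statements merged into one kernel-verified Lean document; each statement's English description precedes it below -/
import Mathlib

section
/- If an endofunctor F on Set is separable by singletons (i.e., for all sets X and all t₀ ≠ t₁ in FX there is a predicate p : X → 2 with p(x)=1 for exactly one x such that Fp(t₀) ≠ Fp(t₁)), then F is m-zippable for every m, i.e., the map ⟨F f₁, …, F f_m⟩ : F(A₁ + ⋯ + A_m) → F(A₁+1) × ⋯ × F(A_m+1) is injective, where f_i maps elements of A_i to themselves and all other elements to the unique element of 1. -/
/-- `F` (with action `map` on functions) is separable by singletons on `X`. -/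
def SepBySingletonsOn (F : Type → Type)
    (map : ∀ {α β : Type}, (α → β) → F α → F β) (X : Type) : Prop :=
  ∀ t₀ t₁ : F X, t₀ ≠ t₁ →
    ∃ p : X → Bool, (∃! x : X, p x = true) ∧ map p t₀ ≠ map p t₁

/-- `F` is `m`-zippable: the canonical map
`⟨F f₁, …, F f_m⟩ : F(A₁ + ⋯ + A_m) → F(A₁+1) × ⋯ × F(A_m+1)` is injective. -/
def Zippable (F : Type → Type)
    (map : ∀ {α β : Type}, (α → β) → F α → F β) (m : ℕ) : Prop :=
  ∀ A : Fin m → Type,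
    Function.Injective (fun t : F (Σ j, A j) => fun i : Fin m =>
      map (fun x : Σ j, A j => if h : x.1 = i then some (h ▸ x.2) else none) t)

theorem separable_by_singletons_implies_zippable
    (F : Type → Type) (map : ∀ {α β : Type}, (α → β) → F α → F β)
    (map_id : ∀ (α : Type) (t : F α), map id t = t)
    (map_comp : ∀ {α β γ : Type} (f : α → β) (g : β → γ) (t : F α),
      map (g ∘ f) t = map g (map f t))
    (hsep : ∀ X : Type, SepBySingletonsOn F (fun {α β} => map) X) :
    ∀ m : ℕ, Zippable F (fun {α β} => map) m := by
  intro m A t₀ t₁ h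
  by_contra hne
  obtain ⟨p, ⟨x, hx, hux⟩, hp⟩ := hsep _ t₀ t₁ hne
  obtain ⟨i, a⟩ := x
  set f : (Σ j, A j) → Option (A i) :=
    fun x => if h : x.1 = i then some (h ▸ x.2) else none with hf
  set q : Option (A i) → Bool := fun o => o.elim false (fun a' => p ⟨i, a'⟩) with hq
  have hfac : p = q ∘ f := by
    funext x'
    obtain ⟨j, a'⟩ := x'
    by_cases hj : j = i
    · subst hj; simp [f, q]
    · simp only [Function.comp, f, q, dif_neg hj, Option.elim]
      by_contra hpt
      have := hux ⟨j, a'⟩ (by simpa using hpt)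
      exact hj (congrArg Sigma.fst this)
  have hft : map f t₀ = map f t₁ := congrFun h i
  apply hp
  rw [hfac]; show map (q ∘ f) t₀ = map (q ∘ f) t₁; rw [map_comp, map_comp, hft]
end

section
/- Let Λ be a separating set of evaluation maps λ : F2 → 2 for a functor F on Set. Then Λ' = { λ, λ ∘ F(one), λ ∘ F(zero), λ ∘ F(neg) | λ ∈ Λ } is strongly separating: for all t₀ ≠ t₁ in F2 there exists μ ∈ Λ' with μ(t₀) ≠ μ(t₁). -/
/-- A set `Λ` of evaluation maps `F2 → 2` is separating. -/
def Separating (F : Type → Type) (map : ∀ {α β : Type}, (α → β) → F α → F β)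
    (Λ : Set (F Bool → Bool)) : Prop :=
  ∀ (X : Type) (t₀ t₁ : F X), t₀ ≠ t₁ →
    ∃ lam ∈ Λ, ∃ p : X → Bool, lam (map p t₀) ≠ lam (map p t₁)

/-- If `Λ` is separating, then the closure
`Λ' = { λ, λ ∘ F one, λ ∘ F zero, λ ∘ F neg | λ ∈ Λ }` is strongly
separating: any two distinct elements of `F2` are distinguished by some
member of `Λ'` directly. -/
theorem closure_strongly_separating
    (F : Type → Type) (map : ∀ {α β : Type}, (α → β) → F α → F β)
    (map_id : ∀ (α : Type) (t : F α), map id t = t)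
    (map_comp : ∀ {α β γ : Type} (f : α → β) (g : β → γ) (t : F α),
      map (g ∘ f) t = map g (map f t))
    (Λ : Set (F Bool → Bool)) (hsep : Separating F (fun {α β} => map) Λ) :
    ∀ t₀ t₁ : F Bool, t₀ ≠ t₁ →
      ∃ μ ∈ {μ : F Bool → Bool | ∃ lam ∈ Λ,
          μ = lam ∨
          μ = lam ∘ map (fun _ : Bool => true) ∨
          μ = lam ∘ map (fun _ : Bool => false) ∨
          μ = lam ∘ map (fun b : Bool => !b)},
        μ t₀ ≠ μ t₁ := by
  intro t₀ t₁ hne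
  obtain ⟨lam, hlam, p, hp⟩ := hsep Bool t₀ t₁ hne
  rcases htt : p true with _ | _ <;> rcases hff : p false with _ | _
  · -- p = const false
    refine ⟨lam ∘ map (fun _ : Bool => false), ⟨lam, hlam, by tauto⟩, ?_⟩
    have : p = fun _ : Bool => false := funext fun b => by cases b <;> assumption
    simpa [this] using hp
  · -- p = neg
    refine ⟨lam ∘ map (fun b : Bool => !b), ⟨lam, hlam, by tauto⟩, ?_⟩
    have : p = fun b : Bool => !b := funext fun b => by cases b <;> simpa
    simpa [this] using hp
  · -- p = id
    refine ⟨lam, ⟨lam, hlam, by tauto⟩, ?_⟩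
    have : p = id := funext fun b => by cases b <;> simpa
    simpa only [this, map_id] using hp
  · -- p = const true
    refine ⟨lam ∘ map (fun _ : Bool => true), ⟨lam, hlam, by tauto⟩, ?_⟩
    have : p = fun _ : Bool => true := funext fun b => by cases b <;> assumption
    simpa [this] using hp
end

section
/- For the functor F = (𝒟(-) + 1)^A with A a set, identify F2 with (the interval [0,1] plus an added point •)^A via d ↦ d(1). Let Λ = {λ_{(a,q)} | a ∈ A, q ∈ [0,1] ∩ ℚ} ∪ {λ_{(a,•)} | a ∈ A} where λ_{(a,q)}(v) = 1 iff v(a) ≠ • and v(a) ≥ q, and λ_{(a,•)}(v) = 1 iff v(a) = •. With the componentwise order on ([0,1]+1)^A (where • is only comparable to itself and reals are ordered as usual), for every v ∈ F2 the upward closure ↑v equals the intersection of all λ ∈ Λ with λ(v) = 1: i.e., v ≤ u iff for all λ ∈ Λ, λ(v) = 1 implies λ(u) = 1. -/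
namespace ProbCone

/-- Elements of `F2 ≅ ([0,1] + 1)^A` for `F = (𝒟(-) + 1)^A`:
`none` represents `•`. -/
abbrev F2 (A : Type) := A → Option (Set.Icc (0 : ℝ) 1)

/-- The componentwise order on `([0,1]+1)^A`, where `•` is only comparable
to itself. -/
def le {A : Type} (v u : F2 A) : Prop :=
  ∀ a : A, (v a = none ∧ u a = none) ∨
    ∃ r s : Set.Icc (0 : ℝ) 1, v a = some r ∧ u a = some s ∧ (r : ℝ) ≤ s

/-- The modality `λ_{(a,q)}`: true iff `v a` is a real `≥ q`. -/
noncomputable def lamReal {A : Type} (a : A) (q : ℚ) (v : F2 A) : Bool :=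
  Option.rec false (fun r => decide ((q : ℝ) ≤ (r : ℝ))) (v a)

/-- The modality `λ_{(a,•)}`: true iff `v a = •`. -/
def lamBullet {A : Type} (a : A) (v : F2 A) : Bool := (v a).isNone

/-- The separating set `Λ` of predicate liftings for `(𝒟(-)+1)^A`. -/
noncomputable def Lam (A : Type) : Set (F2 A → Bool) :=
  {l | (∃ a : A, ∃ q : ℚ, 0 ≤ q ∧ q ≤ 1 ∧ l = lamReal a q) ∨
    ∃ a : A, l = lamBullet a}

/-- For every `v ∈ F2`, the upward closure `↑v` is the intersection of all
modalities in `Λ` containing `v`: `v ≤ u` iff every `λ ∈ Λ` with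
`λ(v) = 1` also satisfies `λ(u) = 1`. -/
theorem upset_eq_inter_modalities {A : Type} (v u : F2 A) :
    le v u ↔ ∀ l ∈ Lam A, l v = true → l u = true := by
  constructor
  · intro h l hl hlv
    rcases hl with ⟨a, q, _, _, rfl⟩ | ⟨a, rfl⟩
    · rcases h a with ⟨hv, hu⟩ | ⟨r, s, hv, hu, hrs⟩
      · simp [lamReal, hv] at hlv
      · simp only [lamReal, hv, hu, decide_eq_true_eq] at hlv ⊢
        linarith
    · rcases h a with ⟨hv, hu⟩ | ⟨r, s, hv, hu, _⟩
      · simp [lamBullet, hu]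
      · simp [lamBullet, hv] at hlv
  · intro h a
    cases hv : v a with
    | none =>
      left
      refine ⟨rfl, ?_⟩
      have := h (lamBullet a) (Or.inr ⟨a, rfl⟩) (by simp [lamBullet, hv])
      simpa [lamBullet, Option.isNone_iff_eq_none] using this
    | some r =>
      right
      have h0 : lamReal a 0 u = true := by
        apply h (lamReal a 0) (Or.inl ⟨a, 0, le_refl _, by norm_num, rfl⟩)
        simp [lamReal, hv, r.2.1]
      cases hu : u a with
      | none => simp [lamReal, hu] at h0
      | some s =>
        refine ⟨r, s, rfl, rfl, ?_⟩
        by_contra hlt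
        push_neg at hlt
        obtain ⟨q, hq1, hq2⟩ := exists_rat_btwn hlt
        have hq0 : (0:ℚ) ≤ q := by
          have := s.2.1; exact_mod_cast le_of_lt (lt_of_le_of_lt this hq1)
        have hqle1 : q ≤ 1 := by
          have := r.2.2; exact_mod_cast le_of_lt (lt_of_lt_of_le hq2 this)
        have := h (lamReal a q) (Or.inl ⟨a, q, hq0, hqle1, rfl⟩)
          (by simp [lamReal, hv]; linarith)
        simp [lamReal, hu] at this
        linarith

end ProbCone
end

section
/- The lifted order ≤^F on F2 for F = Finset (A × -) (characterized by mutual covering: S₀ ≤^F S₁ iff every (a,b) ∈ S₀ has some (a,b') ∈ S₁ with b ≤ b', and every (a,b') ∈ S₁ has some (a,b) ∈ S₀ with b ≤ b') is a partial order: reflexive, transitive, and antisymmetric. -/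
/-- The mutual-covering lifted order `≤^F` on `F2` for `F = Finset (A × -)`. -/
def liftedLE {A : Type} (S₀ S₁ : Finset (A × Bool)) : Prop :=
  (∀ p ∈ S₀, ∃ b' : Bool, (p.1, b') ∈ S₁ ∧ p.2 ≤ b') ∧
  (∀ p ∈ S₁, ∃ b : Bool, (p.1, b) ∈ S₀ ∧ b ≤ p.2)

/-- The lifted order `≤^F` on `Finset (A × Bool)` is a partial order:
reflexive, transitive and antisymmetric. -/
theorem liftedLE_partialOrder (A : Type) [DecidableEq A] :
    (∀ S : Finset (A × Bool), liftedLE S S) ∧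
    (∀ S₀ S₁ S₂ : Finset (A × Bool),
      liftedLE S₀ S₁ → liftedLE S₁ S₂ → liftedLE S₀ S₂) ∧
    (∀ S₀ S₁ : Finset (A × Bool),
      liftedLE S₀ S₁ → liftedLE S₁ S₀ → S₀ = S₁) := by
  refine ⟨?_, ?_, ?_⟩
  · intro S
    exact ⟨fun p hp => ⟨p.2, hp, le_refl _⟩, fun p hp => ⟨p.2, hp, le_refl _⟩⟩
  · intro S₀ S₁ S₂ h01 h12
    constructor
    · intro p hp
      obtain ⟨b1, h1, hb1⟩ := h01.1 p hp
      obtain ⟨b2, h2, hb2⟩ := h12.1 (p.1, b1) h1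
      exact ⟨b2, h2, le_trans hb1 hb2⟩
    · intro p hp
      obtain ⟨b1, h1, hb1⟩ := h12.2 p hp
      obtain ⟨b2, h2, hb2⟩ := h01.2 (p.1, b1) h1
      exact ⟨b2, h2, le_trans hb2 hb1⟩
  · intro S₀ S₁ h01 h10
    ext ⟨a, b⟩
    constructor
    · intro h
      cases b with
      | false =>
        obtain ⟨c, hc, hc'⟩ := h10.2 (a, false) h
        have : c = false := le_antisymm hc' (Bool.false_le c)
        rwa [this] at hc
      | true =>
        obtain ⟨b', h1, hb⟩ := h01.1 (a, true) h
        have : b' = true := le_antisymm (Bool.le_true b') hb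
        rwa [this] at h1
    · intro h
      cases b with
      | false =>
        obtain ⟨c, hc, hc'⟩ := h01.2 (a, false) h
        have : c = false := le_antisymm hc' (Bool.false_le c)
        rwa [this] at hc
      | true =>
        obtain ⟨b', h1, hb⟩ := h10.1 (a, true) h
        have : b' = true := le_antisymm (Bool.le_true b') hb
        rwa [this] at h1
end
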